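/- Let A ∈ ℂ^{n×n}, λ ∈ ℂ, and v ∈ ℂ^n with ‖v‖ = 1 and Av = λv. Then λ is a simple eigenvalue of A (a root of multiplicity one of the characteristic polynomial of A) if and only if the linear map A_{λ,v} : T_v → T_v is invertible. -/

import Mathlib

noncomputable section

open Matrix Set

/-- `T_v`: the orthogonal complement of `v` in `ℂ^n`. -/
def Tv {n : ℕ} (v : EuclideanSpace ℂ (Fin n)) : Submodule ℂ (EuclideanSpace ℂ (Fin n)) :=
  (ℂ ∙ v)ᗮ

/-- The linear map `A_{λ,v} : T_v → T_v`, `x ↦ P_{v⊥}((A - λ·Id) x)`. -/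
def Alv {n : ℕ} (A : Matrix (Fin n) (Fin n) ℂ) (lam : ℂ) (v : EuclideanSpace ℂ (Fin n)) :
    Tv v →ₗ[ℂ] Tv v :=
  (Tv v).orthogonalProjection.toLinearMap ∘ₗ
    (Matrix.toEuclideanLin A - lam • LinearMap.id) ∘ₗ (Tv v).subtype

/-- `A_{λ,v}` as a continuous linear map. -/
def AlvC {n : ℕ} (A : Matrix (Fin n) (Fin n) ℂ) (lam : ℂ) (v : EuclideanSpace ℂ (Fin n)) :
    Tv v →L[ℂ] Tv v :=
  LinearMap.toContinuousLinearMap (Alv A lam v)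

/-- Frobenius norm of a complex matrix. -/
def frobNorm {n : ℕ} (A : Matrix (Fin n) (Fin n) ℂ) : ℝ :=
  Real.sqrt (∑ i, ∑ j, ‖A i j‖ ^ 2)

/-- The condition number `μ(A,λ,v) = ‖A‖_F ‖A_{λ,v}^{-1}‖`. -/
def mu {n : ℕ} (A : Matrix (Fin n) (Fin n) ℂ) (lam : ℂ) (v : EuclideanSpace ℂ (Fin n)) : ℝ :=
  frobNorm A * ‖(AlvC A lam v).inverse‖

/-- Fubini-Study (angular) distance. -/
def dP {n : ℕ} (v w : EuclideanSpace ℂ (Fin n)) : ℝ :=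
  Real.arccos (‖(inner ℂ v w : ℂ)‖ / (‖v‖ * ‖w‖))

/-- The distance on triples. -/
def distT {n : ℕ} (A : Matrix (Fin n) (Fin n) ℂ) (lam : ℂ) (v : EuclideanSpace ℂ (Fin n))
    (A' : Matrix (Fin n) (Fin n) ℂ) (lam' : ℂ) (v' : EuclideanSpace ℂ (Fin n)) : ℝ :=
  Real.sqrt ((frobNorm ((frobNorm A)⁻¹ • A - (frobNorm A')⁻¹ • A')) ^ 2 +
    ‖lam / (frobNorm A : ℂ) - lam' / (frobNorm A' : ℂ)‖ ^ 2 + dP v v' ^ 2)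

/-
Since `(A - λ) v = 0`, in a basis adapted to `ℂ^n = ℂ v ⊕ T_v` the matrix of `A - λ` is block
upper triangular, with first column zero and lower right block `A_{λ,v}`. Hence
`χ_A(λ + X) = X · χ_{A_{λ,v}}(X)`, so `λ` is a simple root of `χ_A` exactly when `0` is not an
eigenvalue of `A_{λ,v}`.
-/

open Polynomial Module

namespace LinearMap

variable {K V : Type*} [Field K] [AddCommGroup V] [Module K V] [FiniteDimensional K V]

theorem charpoly_eq_X_pow_mul_of_le_ker {p q : Submodule K V} (hpq : IsCompl p q)
    {f : End K V} (hf : p ≤ ker f) :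
    f.charpoly = X ^ finrank K p * (q.projectionOnto p hpq.symm ∘ₗ f ∘ₗ q.subtype).charpoly := by
  classical
  let e := p.prodEquivOfIsCompl q hpq
  let b₁ := finBasis K p
  let b₂ := finBasis K q
  have hblocks : toMatrix (b₁.prod b₂) (b₁.prod b₂) (e.symm.conj f) =
      Matrix.fromBlocks 0 (toMatrix b₂ b₁ (p.projectionOnto q hpq ∘ₗ f ∘ₗ q.subtype)) 0
        (toMatrix b₂ b₂ (q.projectionOnto p hpq.symm ∘ₗ f ∘ₗ q.subtype)) := by
    have hker : ∀ x : p, f x = 0 := fun x => hf x.2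
    ext (i | i) (j | j) <;>
      simp [toMatrix_apply, e, LinearEquiv.conj_apply, hker]
  rw [← e.symm.charpoly_conj f, ← charpoly_toMatrix _ (b₁.prod b₂), hblocks,
    Matrix.charpoly_fromBlocks_zero₂₁, Matrix.charpoly_zero, charpoly_toMatrix, Fintype.card_fin]

theorem rootMultiplicity_charpoly_zero_eq_zero_iff_bijective (f : End K V) :
    f.charpoly.rootMultiplicity 0 = 0 ↔ Function.Bijective f := by
  rw [← Nat.le_zero, ← not_lt, rootMultiplicity_pos f.charpoly_monic.ne_zero,
    ← Module.End.hasEigenvalue_iff_isRoot_charpoly, Module.End.hasEigenvalue_iff, not_not,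
    Module.End.eigenspace_zero, ker_eq_bot]
  exact ⟨fun h => ⟨h, injective_iff_surjective.mp h⟩, (·.1)⟩

theorem charpoly_eq_X_mul_charpoly_compression {𝕜 E : Type*} [RCLike 𝕜] [NormedAddCommGroup E]
    [InnerProductSpace 𝕜 E] [FiniteDimensional 𝕜 E] {f : End 𝕜 E} {v : E} (hv : v ≠ 0)
    (hfv : f v = 0) :
    f.charpoly = X * ((𝕜 ∙ v)ᗮ.orthogonalProjectionOnto.toLinearMap ∘ₗ f ∘ₗ
      (𝕜 ∙ v)ᗮ.subtype).charpoly := by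
  -- Working with `(𝕜 ∙ v)ᗮᗮ` rather than `𝕜 ∙ v` makes the projection onto `(𝕜 ∙ v)ᗮ` along it
  -- definitionally the orthogonal projection.
  have hspan : (𝕜 ∙ v)ᗮᗮ = 𝕜 ∙ v := Submodule.orthogonal_orthogonal _
  have hker : (𝕜 ∙ v)ᗮᗮ ≤ ker f := by
    rwa [hspan, Submodule.span_singleton_le_iff_mem]
  have hrank : finrank 𝕜 (𝕜 ∙ v)ᗮᗮ = 1 := by
    rw [hspan, finrank_span_singleton hv]
  have h := charpoly_eq_X_pow_mul_of_le_ker (𝕜 ∙ v)ᗮ.isCompl_orthogonal.symm hker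
  rwa [hrank, pow_one] at h

end LinearMap

theorem Matrix.charpoly_toEuclideanLin {𝕜 ι : Type*} [RCLike 𝕜] [Fintype ι] [DecidableEq ι]
    (A : Matrix ι ι 𝕜) : (toEuclideanLin A).charpoly = A.charpoly := by
  rw [toEuclideanLin, toLpLin_eq_toLin, charpoly_toLin]

theorem Polynomial.rootMultiplicity_zero_X_mul {R : Type*} [CommRing R] [Nontrivial R]
    {p : R[X]} (hp : p ≠ 0) : (X * p).rootMultiplicity 0 = p.rootMultiplicity 0 + 1 := by
  simpa [mul_comm] using rootMultiplicity_mul_X_sub_C_pow (a := (0 : R)) (n := 1) hp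

/-- Proposition: `λ` is a simple eigenvalue of `A` iff `A_{λ,v}` is invertible. -/
theorem simple_iff_Alv_bijective {n : ℕ} (A : Matrix (Fin n) (Fin n) ℂ) (lam : ℂ)
    (v : EuclideanSpace ℂ (Fin n)) (hv : ‖v‖ = 1)
    (heig : Matrix.toEuclideanLin A v = lam • v) :
    (Matrix.charpoly A).rootMultiplicity lam = 1 ↔
      Function.Bijective (Alv A lam v) := by
  have hv0 : v ≠ 0 := norm_ne_zero_iff.mp (by simp [hv])
  set g := Matrix.toEuclideanLin A - lam • 1
  have hgv : g v = 0 := by simp [g, heig]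
  have hshift : A.charpoly.rootMultiplicity lam = g.charpoly.rootMultiplicity 0 := by
    rw [rootMultiplicity_eq_rootMultiplicity, ← Matrix.charpoly_toEuclideanLin,
      ← LinearMap.charpoly_sub_smul]
  have hsplit : g.charpoly = X * (Alv A lam v).charpoly :=
    LinearMap.charpoly_eq_X_mul_charpoly_compression hv0 hgv
  rw [hshift, hsplit, rootMultiplicity_zero_X_mul (Alv A lam v).charpoly_monic.ne_zero,
    ← LinearMap.rootMultiplicity_charpoly_zero_eq_zero_iff_bijective]
  omega

end
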